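/- Let T > 0 and α* ∈ (0,1), and let α : [0,T] → (0, α*] be any function. Then there exists a constant C > 0, depending only on α* and T, such that for every positive integer N (with τ = T/N) and every n with 1 ≤ n ≤ N, Σ_{k=1}^{n} b_k^{(k)} ≤ C, where b_1^{(1)} = 1 + τ a_1^{(1)} and b_k^{(k)} = τ a_k^{(k)} for 2 ≤ k ≤ n, the coefficients at level k being computed with order α̃_k = α(t_{k−1/2}). -/

import Mathlib

/-- The kernel `ω_{1-β}(t) = t^{-β} / Γ(1-β)`. -/
noncomputable def omegaK (β t : ℝ) : ℝ := t ^ (-β) / Real.Gamma (1 - β)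

/-- The L1⁺ coefficient `a_j^{(n)}(α)` on the uniform mesh `t_k = k τ`:
`a_{n-k+1}^{(n)}(α) = (1/τ²) ∫_{t_{n-1}}^{t_n} ∫_{t_{k-1}}^{min(t, t_k)} ω_{1-α}(t-s) ds dt`,
expressed with `j = n - k + 1`, i.e. `k = n - j + 1`. -/
noncomputable def acoef (τ α : ℝ) (n j : ℕ) : ℝ :=
  (1 / τ ^ 2) * ∫ t in (((n : ℝ) - 1) * τ)..((n : ℝ) * τ),
      ∫ s in (((n : ℝ) - (j : ℝ)) * τ)..(min t (((n : ℝ) - (j : ℝ) + 1) * τ)),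
        omegaK α (t - s)

/-- Variable-order coefficients: at time level `n` the order is `α̃_n = α((n - 1/2) τ)`, and
`b_1^{(n)} = 1 + τ a_1^{(n)}`, `b_j^{(n)} = τ a_j^{(n)}` for `j ≥ 2`. -/
noncomputable def bvar (α : ℝ → ℝ) (τ : ℝ) (n j : ℕ) : ℝ :=
  if j = 1 then 1 + τ * acoef τ (α (((n : ℝ) - 1 / 2) * τ)) n 1
  else τ * acoef τ (α (((n : ℝ) - 1 / 2) * τ)) n j

/-!
Since `Γ ≥ 1` on `(0, 1]`, every kernel of order `β ∈ [0, α*]` satisfies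
`ω_{1-β}(u) ≤ u^{-β} ≤ 1 + u^{-α*}`, a majorant independent of the variable order.
After the substitution `u = t - s`, the diagonal term `τ a_k^{(k)}` is the average over
`t ∈ [t_{k-1}, t_k]` of the kernel integrated over `[t - min(t, τ), t] ⊆ [t_{k-2}, t_k]`, hence at
most the integral of the majorant over two cells. Summing over `k` counts every cell at most
twice, so `∑ b_k^{(k)} ≤ 1 + 2 ∫_0^T (1 + u^{-α*}) du`.
-/

open MeasureTheory Set intervalIntegral
open scoped Interval

theorem Real.one_le_Gamma_of_le_one {x : ℝ} (h0 : 0 < x) (h1 : x ≤ 1) : 1 ≤ Real.Gamma x := by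
  simpa [Real.Gamma_one] using
    Real.Gamma_strictAntiOn_Ioc.antitoneOn ⟨h0, h1⟩ ⟨one_pos, le_rfl⟩ h1

theorem rpow_neg_le_one_add_rpow_neg {u β γ : ℝ} (hu : 0 ≤ u) (hβ : 0 ≤ β) (hβγ : β ≤ γ) :
    u ^ (-β) ≤ 1 + u ^ (-γ) := by
  have hγ : 0 ≤ u ^ (-γ) := Real.rpow_nonneg hu _
  rcases hu.eq_or_lt with rfl | hu
  · linarith [Real.zero_rpow_le_one (-β)]
  rcases le_total u 1 with h | h
  · linarith [Real.rpow_le_rpow_of_exponent_ge hu h (neg_le_neg hβγ)]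
  · linarith [Real.rpow_le_one_of_one_le_of_nonpos h (neg_nonpos.2 hβ)]

noncomputable def omegaMajorant (γ u : ℝ) : ℝ := 1 + u ^ (-γ)

theorem omegaMajorant_nonneg (γ : ℝ) {u : ℝ} (hu : 0 ≤ u) : 0 ≤ omegaMajorant γ u :=
  add_nonneg zero_le_one (Real.rpow_nonneg hu _)

theorem intervalIntegrable_omegaMajorant {γ : ℝ} (hγ : γ < 1) (a b : ℝ) :
    IntervalIntegrable (omegaMajorant γ) volume a b :=
  intervalIntegrable_const.add (intervalIntegrable_rpow' (by linarith))

theorem omegaK_nonneg {β u : ℝ} (hβ : β < 1) (hu : 0 ≤ u) : 0 ≤ omegaK β u :=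
  div_nonneg (Real.rpow_nonneg hu _) (Real.Gamma_pos_of_pos (by linarith)).le

theorem omegaK_le_omegaMajorant {β γ u : ℝ} (hβ0 : 0 ≤ β) (hβγ : β ≤ γ) (hβ1 : β < 1)
    (hu : 0 ≤ u) : omegaK β u ≤ omegaMajorant γ u :=
  calc omegaK β u ≤ u ^ (-β) :=
        div_le_self (Real.rpow_nonneg hu _) (Real.one_le_Gamma_of_le_one (by linarith) (by linarith))
    _ ≤ omegaMajorant γ u := rpow_neg_le_one_add_rpow_neg hu hβ0 hβγ

theorem intervalIntegrable_omegaK {β : ℝ} (hβ : β < 1) (a b : ℝ) :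
    IntervalIntegrable (omegaK β) volume a b :=
  (intervalIntegrable_rpow' (r := -β) (by linarith)).div_const _

theorem integral_omegaK_sub_le {β γ m t lo hi : ℝ} (hβ0 : 0 ≤ β) (hβγ : β ≤ γ) (hγ1 : γ < 1)
    (hm : 0 ≤ m) (hlo0 : 0 ≤ lo) (hlo : lo ≤ t - m) (hhi : t ≤ hi) :
    ∫ s in (0 : ℝ)..m, omegaK β (t - s) ≤ ∫ u in lo..hi, omegaMajorant γ u := by
  rw [integral_comp_sub_left (omegaK β) t, sub_zero]
  calc ∫ u in t - m..t, omegaK β u ≤ ∫ u in t - m..t, omegaMajorant γ u :=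
        integral_mono_on (by linarith) (intervalIntegrable_omegaK (by linarith) _ _)
          (intervalIntegrable_omegaMajorant hγ1 _ _)
          fun u hu => omegaK_le_omegaMajorant hβ0 hβγ (by linarith) (by linarith [hu.1])
    _ ≤ ∫ u in lo..hi, omegaMajorant γ u :=
        integral_mono_interval hlo (by linarith) hhi
          (ae_restrict_of_forall_mem measurableSet_Ioc
            fun u hu => omegaMajorant_nonneg γ (by linarith [hu.1]))
          (intervalIntegrable_omegaMajorant hγ1 _ _)

-- `k - 2` truncates in `ℕ`, so for `k = 1` the window is `[0, τ]`.
theorem mul_acoef_diag_le {β γ τ : ℝ} (hβ0 : 0 ≤ β) (hβγ : β ≤ γ) (hγ1 : γ < 1) (hτ : 0 < τ)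
    {k : ℕ} (hk : 1 ≤ k) :
    τ * acoef τ β k k ≤ ∫ u in ((k - 2 : ℕ) : ℝ) * τ..k * τ, omegaMajorant γ u := by
  set M := ∫ u in ((k - 2 : ℕ) : ℝ) * τ..k * τ, omegaMajorant γ u
  have hk1 : (1 : ℝ) ≤ k := by exact_mod_cast hk
  have hinner : ∀ t ∈ Ι (((k : ℝ) - 1) * τ) (k * τ),
      ‖∫ s in (0 : ℝ)..min t τ, omegaK β (t - s)‖ ≤ M := by
    intro t ht
    rw [uIoc_of_le (by nlinarith)] at ht
    have ht0 : 0 ≤ t := by nlinarith [ht.1]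
    have hmin0 : 0 ≤ min t τ := le_min ht0 hτ.le
    have hlo : ((k - 2 : ℕ) : ℝ) * τ ≤ t - min t τ := by
      rcases Nat.lt_or_ge k 2 with hk2 | hk2
      · simp [Nat.sub_eq_zero_of_le hk2.le]
      · rw [Nat.cast_sub hk2]
        push_cast
        nlinarith [min_le_right t τ, ht.1]
    rw [Real.norm_of_nonneg (integral_nonneg hmin0 fun s hs =>
      omegaK_nonneg (by linarith) (by linarith [hs.2, min_le_left t τ]))]
    exact integral_omegaK_sub_le hβ0 hβγ hγ1 hmin0 (by positivity) hlo ht.2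
  have hbound := norm_integral_le_of_norm_le_const hinner
  rw [show (k : ℝ) * τ - (k - 1) * τ = τ by ring, abs_of_pos hτ] at hbound
  simp only [acoef, sub_self, zero_mul, zero_add, one_mul]
  calc τ * (1 / τ ^ 2 * ∫ t in ((k : ℝ) - 1) * τ..k * τ, ∫ s in (0 : ℝ)..min t τ, omegaK β (t - s))
      ≤ τ * (1 / τ ^ 2 * (M * τ)) := by gcongr; exact (le_abs_self _).trans hbound
    _ = M := by field_simp

theorem sum_integral_two_cells {f : ℝ → ℝ} (hf : ∀ a b, IntervalIntegrable f volume a b)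
    (τ : ℝ) (n : ℕ) :
    ∑ k ∈ Finset.Icc 1 n, ∫ u in ((k - 2 : ℕ) : ℝ) * τ..k * τ, f u
      = (∫ u in (0 : ℝ)..n * τ, f u) + ∫ u in (0 : ℝ)..((n - 1 : ℕ) : ℝ) * τ, f u := by
  induction n with
  | zero => simp
  | succ n ih =>
    rw [Finset.sum_Icc_succ_top (by omega), ih, show n + 1 - 2 = n - 1 by omega,
      ← integral_interval_sub_left (hf 0 (((n + 1 : ℕ) : ℝ) * τ)) (hf 0 (((n - 1 : ℕ) : ℝ) * τ)),
      Nat.add_sub_cancel]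
    ring

theorem bvar_diag (α : ℝ → ℝ) (τ : ℝ) (k : ℕ) :
    bvar α τ k k = (if k = 1 then 1 else 0) + τ * acoef τ (α (((k : ℝ) - 1 / 2) * τ)) k k := by
  unfold bvar
  split_ifs with hk
  · subst hk; rfl
  · ring

theorem stmt5 (T αb : ℝ) (hT : 0 < T) (hαb : αb ∈ Set.Ioo (0 : ℝ) 1)
    (α : ℝ → ℝ) (hα : ∀ t ∈ Set.Icc (0 : ℝ) T, 0 < α t ∧ α t ≤ αb) :
    ∃ C > 0, ∀ N : ℕ, 0 < N → ∀ n : ℕ, 1 ≤ n → n ≤ N →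
      ∑ k ∈ Finset.Icc 1 n, bvar α (T / N) k k ≤ C := by
  set G := ∫ u in (0 : ℝ)..T, omegaMajorant αb u
  have hG : 0 ≤ G := integral_nonneg hT.le fun u hu => omegaMajorant_nonneg αb hu.1
  refine ⟨1 + 2 * G, by positivity, fun N hN n hn hnN => ?_⟩
  set τ := T / N
  have hτ : 0 < τ := by positivity
  have hNτ : (N : ℝ) * τ = T := by simp only [τ]; field_simp
  have hG_ge : ∀ m ≤ N, ∫ u in (0 : ℝ)..m * τ, omegaMajorant αb u ≤ G := fun m hm => by
    have hm' : (m : ℝ) ≤ N := by exact_mod_cast hm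
    exact integral_mono_interval le_rfl (by positivity) (by nlinarith)
      (ae_restrict_of_forall_mem measurableSet_Ioc fun u hu => omegaMajorant_nonneg αb hu.1.le)
      (intervalIntegrable_omegaMajorant hαb.2 _ _)
  calc ∑ k ∈ Finset.Icc 1 n, bvar α τ k k
      = 1 + ∑ k ∈ Finset.Icc 1 n, τ * acoef τ (α (((k : ℝ) - 1 / 2) * τ)) k k := by
        simp only [bvar_diag, Finset.sum_add_distrib, Finset.sum_ite_eq', Finset.mem_Icc,
          le_refl, hn, and_self, if_true]
    _ ≤ 1 + ∑ k ∈ Finset.Icc 1 n, ∫ u in ((k - 2 : ℕ) : ℝ) * τ..k * τ, omegaMajorant αb u := by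
        gcongr with k hk
        obtain ⟨hk1, hkn⟩ := Finset.mem_Icc.1 hk
        have hk1' : (1 : ℝ) ≤ k := by exact_mod_cast hk1
        have hkN : (k : ℝ) ≤ N := by exact_mod_cast hkn.trans hnN
        obtain ⟨hα0, hαb'⟩ := hα (((k : ℝ) - 1 / 2) * τ) ⟨by nlinarith, by nlinarith⟩
        exact mul_acoef_diag_le hα0.le hαb' hαb.2 hτ hk1
    _ ≤ 1 + 2 * G := by
        rw [sum_integral_two_cells (intervalIntegrable_omegaMajorant hαb.2)]
        linarith [hG_ge n hnN, hG_ge (n - 1) (by omega)]
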